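/- Let K be a global field, S a finite set of places of K, and φ an endomorphism of P^1 defined over K with good reduction outside S. Suppose P = P_{−m+1} ↦ P_{−m+2} ↦ … ↦ P_{−1} ↦ P_0 = [0:1] ↦ [0:1] is an orbit for φ (so that P_0 is a fixed point). Then for any integers a, b with 0 < a < b ≤ m−1 and any place 𝔭 ∉ S, one has δ_𝔭(P_{−b}, P_{−a}) = δ_𝔭(P_{−b}, P_0) ≤ δ_𝔭(P_{−a}, P_0). -/

import Mathlib

/-!
Common definitions used to formalize the statements of
"Preperiodic points for rational functions defined over a global field
in terms of good reduction" (arXiv:1403.2293).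

* A (normalized, non-archimedean) place of a field `K` is modeled as a surjective
  discrete valuation `v : K → ℤ` (with the junk convention `v 0 = 0`).
* `P1 K` is the projective line over `K`; a point `[x : y]` is `P1.mk x y _`.
* An endomorphism of `P1` defined over `K` is a map `φ : P1 K → P1 K` admitting a
  lift by a pair of binary forms of a common degree `d`, given through their
  coefficient vectors, with nonvanishing resultant (the resultant is defined as
  the determinant of the Sylvester matrix).
* `φ` has good reduction at a place `pl` if it admits a lift whose coefficients
  are `pl`-integral and whose resultant is a `pl`-unit.
* `logDist` is the `𝔭`-adic logarithmic distance `δ_𝔭`; two points of `P1 K` have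
  the same reduction modulo `pl` if and only if `0 < logDist pl P Q`.
* The multiplier of a fixed point `[x:y]` of a map lifted by the forms `(a, b)` of
  degree `d` is computed by the trace formula
  `λ = (∂F/∂x (x,y) + ∂G/∂y (x,y) - d⬝c)/c`, where `c` is the scalar with
  `F(x,y) = c⬝x` and `G(x,y) = c⬝y`.
-/

namespace ArxivPreper

/-- A normalized non-archimedean place of `K`: a surjective discrete valuation
`v : K → ℤ`, with the junk convention `v 0 = 0`. -/
structure Place (K : Type*) [Field K] where
  v : K → ℤ
  v_zero : v 0 = 0
  v_mul : ∀ x y : K, x ≠ 0 → y ≠ 0 → v (x * y) = v x + v y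
  v_add : ∀ x y : K, x ≠ 0 → y ≠ 0 → x + y ≠ 0 → min (v x) (v y) ≤ v (x + y)
  v_surj : ∀ n : ℤ, ∃ x : K, x ≠ 0 ∧ v x = n

namespace Place

variable {K : Type*} [Field K] (pl : Place K)

lemma v_one : pl.v 1 = 0 := by
  have h := pl.v_mul 1 1 one_ne_zero one_ne_zero
  rw [one_mul] at h
  omega

lemma v_neg_one : pl.v (-1 : K) = 0 := by
  have h := pl.v_mul (-1 : K) (-1) (by norm_num) (by norm_num)
  rw [show ((-1 : K) * (-1)) = 1 by ring, pl.v_one] at h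
  omega

lemma v_neg (x : K) : pl.v (-x) = pl.v x := by
  by_cases h : x = 0
  · simp [h]
  · have h1 := pl.v_mul (-1) x (by norm_num) h
    rw [show (-1 : K) * x = -x by ring, pl.v_neg_one] at h1
    omega

lemma v_mul_nonneg {x y : K} (hx : 0 ≤ pl.v x) (hy : 0 ≤ pl.v y) : 0 ≤ pl.v (x * y) := by
  by_cases h1 : x = 0
  · simp [h1, pl.v_zero]
  by_cases h2 : y = 0
  · simp [h2, pl.v_zero]
  rw [pl.v_mul x y h1 h2]
  omega

lemma v_add_nonneg {x y : K} (hx : 0 ≤ pl.v x) (hy : 0 ≤ pl.v y) : 0 ≤ pl.v (x + y) := by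
  by_cases h1 : x = 0
  · simpa [h1] using hy
  by_cases h2 : y = 0
  · simpa [h2] using hx
  by_cases h3 : x + y = 0
  · rw [h3, pl.v_zero]
  exact le_trans (le_min hx hy) (pl.v_add x y h1 h2 h3)

lemma hred_add {a b : K} (ha : a = 0 ∨ 0 < pl.v a) (hb : b = 0 ∨ 0 < pl.v b) :
    a + b = 0 ∨ 0 < pl.v (a + b) := by
  rcases ha with ha | ha
  · subst ha; simpa using hb
  rcases hb with hb | hb
  · subst hb; simpa using Or.inr ha
  by_cases h3 : a + b = 0
  · exact Or.inl h3
  · right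
    have hA : a ≠ 0 := by
      intro h; rw [h, pl.v_zero] at ha; exact absurd ha (lt_irrefl 0)
    have hB : b ≠ 0 := by
      intro h; rw [h, pl.v_zero] at hb; exact absurd hb (lt_irrefl 0)
    exact lt_of_lt_of_le (lt_min ha hb) (pl.v_add a b hA hB h3)

lemma hred_mul {a b : K} (ha : 0 ≤ pl.v a) (hb : b = 0 ∨ 0 < pl.v b) :
    a * b = 0 ∨ 0 < pl.v (a * b) := by
  rcases hb with hb | hb
  · exact Or.inl (by rw [hb, mul_zero])
  by_cases h1 : a = 0
  · exact Or.inl (by rw [h1, zero_mul])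
  by_cases h2 : b = 0
  · exact Or.inl (by rw [h2, mul_zero])
  · right
    rw [pl.v_mul a b h1 h2]
    omega

end Place

/-- `K` is a global field: a number field, or a finite extension of `𝔽_p(t)`. -/
def IsGlobalField (K : Type*) [Field K] : Prop :=
  NumberField K ∨
    ∃ (p : ℕ) (hp : Fact p.Prime),
      letI := hp
      ∃ A : Algebra (RatFunc (ZMod p)) K,
        letI := A
        FiniteDimensional (RatFunc (ZMod p)) K

variable {K : Type*} [Field K]

/-- The projective line over `K`. -/
abbrev P1 (K : Type*) [Field K] := Projectivization K (Fin 2 → K)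

/-- The point `[x : y]` of the projective line. -/
def P1.mk (x y : K) (h : ¬(x = 0 ∧ y = 0)) : P1 K :=
  Projectivization.mk K ![x, y]
    (fun h0 => h ⟨by simpa using congrFun h0 0, by simpa using congrFun h0 1⟩)

/-- The point `[0 : 1]`. -/
def P1zero : P1 K := P1.mk 0 1 (fun h => one_ne_zero h.2)

/-- Value at `(x, y)` of the binary form of degree `d` with coefficient
vector `a` (the coefficient of `x^i y^(d-i)` is `a i`). -/
def formEval (d : ℕ) (a : Fin (d + 1) → K) (x y : K) : K :=
  ∑ i : Fin (d + 1), a i * x ^ (i : ℕ) * y ^ (d - (i : ℕ))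

/-- The Sylvester matrix of two binary forms of degree `d`, given by their
coefficient vectors. -/
def sylvester (d : ℕ) (a b : Fin (d + 1) → K) : Matrix (Fin (d + d)) (Fin (d + d)) K :=
  Matrix.of fun i j =>
    if hi : (i : ℕ) < d then
      if h : (i : ℕ) ≤ (j : ℕ) ∧ (j : ℕ) ≤ (i : ℕ) + d then a ⟨(j : ℕ) - (i : ℕ), by omega⟩
      else 0
    else
      if h : (i : ℕ) - d ≤ (j : ℕ) ∧ (j : ℕ) ≤ (i : ℕ) then
        b ⟨(j : ℕ) - ((i : ℕ) - d), by omega⟩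
      else 0

/-- The resultant of two binary forms of degree `d`: the determinant of their
Sylvester matrix. -/
def resultant (d : ℕ) (a b : Fin (d + 1) → K) : K := (sylvester d a b).det

/-- `(a, b)` is a pair of coefficient vectors of binary forms `F`, `G` of common degree `d`,
with nonzero resultant, such that `φ([x:y]) = [F(x,y) : G(x,y)]` on `P1 K`.  This witnesses
that `φ` is an endomorphism of the projective line defined over `K` (of degree `d`). -/
def IsLift (φ : P1 K → P1 K) (d : ℕ) (a b : Fin (d + 1) → K) : Prop :=
  resultant d a b ≠ 0 ∧
    ∀ (x y : K) (h : ¬(x = 0 ∧ y = 0)),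
      ∃ h' : ¬(formEval d a x y = 0 ∧ formEval d b x y = 0),
        φ (P1.mk x y h) = P1.mk (formEval d a x y) (formEval d b x y) h'

/-- `φ` is an endomorphism of `P1` defined over `K`. -/
def IsEndo (φ : P1 K → P1 K) : Prop := ∃ d a b, IsLift φ d a b

/-- `φ` has good reduction at the place `pl`: it can be written as `[F : G]` with `F`, `G`
binary forms of a common degree whose coefficients are `pl`-integral and whose resultant
is a `pl`-unit. -/
def GoodReduction (pl : Place K) (φ : P1 K → P1 K) : Prop :=
  ∃ (d : ℕ) (a b : Fin (d + 1) → K),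
    IsLift φ d a b ∧ (∀ i, 0 ≤ pl.v (a i)) ∧ (∀ i, 0 ≤ pl.v (b i)) ∧
      pl.v (resultant d a b) = 0

open Classical in
/-- The valuation of a place extended by `v 0 = ⊤`. -/
noncomputable def extv (pl : Place K) (x : K) : WithTop ℤ :=
  if x = 0 then ⊤ else (pl.v x : WithTop ℤ)

open Classical in
/-- `min (v x) (v y)` for a nonzero vector `(x, y)`, ignoring vanishing coordinates. -/
noncomputable def vminVec (pl : Place K) (w : Fin 2 → K) : ℤ :=
  if w 0 = 0 then pl.v (w 1)
  else if w 1 = 0 then pl.v (w 0)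
  else min (pl.v (w 0)) (pl.v (w 1))

/-- The `𝔭`-adic logarithmic distance
`δ_𝔭(P,Q) = v(x₁y₂ - x₂y₁) - min (v x₁) (v y₁) - min (v x₂) (v y₂)`
(computed on fixed representatives; it is independent of the choice of homogeneous
coordinates).  Note `δ_𝔭(P,Q) = ⊤` iff `P = Q`, and two points have the same reduction
modulo `pl` iff `0 < δ_𝔭(P,Q)`. -/
noncomputable def logDist (pl : Place K) (P Q : P1 K) : WithTop ℤ :=
  extv pl (P.rep 0 * Q.rep 1 - Q.rep 0 * P.rep 1) +
    ((-(vminVec pl P.rep) - vminVec pl Q.rep : ℤ) : WithTop ℤ)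

/-- The forward orbit `{φ^n(P) : n ∈ ℕ}` of `P` under `φ`. -/
def orbit (φ : P1 K → P1 K) (P : P1 K) : Set (P1 K) := Set.range fun n : ℕ => φ^[n] P

/-- `P` is preperiodic for `φ`: its forward orbit is finite. -/
def Preperiodic (φ : P1 K → P1 K) (P : P1 K) : Prop := (orbit φ P).Finite

/-- `P` is periodic for `φ`. -/
def PeriodicPt (φ : P1 K → P1 K) (P : P1 K) : Prop := ∃ n : ℕ, 0 < n ∧ φ^[n] P = P

/-- `x` is an `S`-unit of `K`. -/
def IsSUnit (S : Finset (Place K)) (x : K) : Prop :=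
  x ≠ 0 ∧ ∀ pl : Place K, pl ∉ S → pl.v x = 0

/-- The ring of `S`-integers of `K`. -/
def SIntegers (S : Finset (Place K)) : Subring K where
  carrier := {x : K | ∀ pl : Place K, pl ∉ S → 0 ≤ pl.v x}
  zero_mem' := fun pl _ => le_of_eq pl.v_zero.symm
  one_mem' := fun pl _ => le_of_eq pl.v_one.symm
  add_mem' := fun hx hy pl hpl => pl.v_add_nonneg (hx pl hpl) (hy pl hpl)
  mul_mem' := fun hx hy pl hpl => pl.v_mul_nonneg (hx pl hpl) (hy pl hpl)
  neg_mem' := fun {x} hx pl hpl => show 0 ≤ pl.v (-x) by rw [pl.v_neg]; exact hx pl hpl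

/-- The local ring `R_𝔭 = {x : v_𝔭(x) ≥ 0}` at the place `pl`. -/
def integersAt (pl : Place K) : Subring K where
  carrier := {x : K | 0 ≤ pl.v x}
  zero_mem' := le_of_eq pl.v_zero.symm
  one_mem' := le_of_eq pl.v_one.symm
  add_mem' := fun hx hy => pl.v_add_nonneg hx hy
  mul_mem' := fun hx hy => pl.v_mul_nonneg hx hy
  neg_mem' := fun {x} hx => show 0 ≤ pl.v (-x) by rw [pl.v_neg]; exact hx

/-- The maximal ideal `{x : v_𝔭(x) > 0}` of the local ring at `pl`. -/
def maxIdealAt (pl : Place K) : Ideal ↥(integersAt pl) where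
  carrier := {x : ↥(integersAt pl) | (x : K) = 0 ∨ 0 < pl.v (x : K)}
  zero_mem' := Or.inl rfl
  add_mem' := fun {a b} ha hb => by
    have h := pl.hred_add (a := (a : K)) (b := (b : K)) ha hb
    show ((a + b : ↥(integersAt pl)) : K) = 0 ∨ 0 < pl.v ((a + b : ↥(integersAt pl)) : K)
    push_cast
    exact h
  smul_mem' := fun c {x} hx => by
    have h := pl.hred_mul (a := (c : K)) (b := (x : K)) c.2 hx
    show ((c • x : ↥(integersAt pl)) : K) = 0 ∨ 0 < pl.v ((c • x : ↥(integersAt pl)) : K)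
    rw [smul_eq_mul]
    push_cast
    exact h

/-- The residue field `k(𝔭)` at the place `pl`. -/
def Residue (pl : Place K) : Type _ := ↥(integersAt pl) ⧸ maxIdealAt pl

/-- Value at `(x,y)` of `∂F/∂x` for the binary form `F` of degree `d` with coefficient
vector `a`. -/
def formEvalDx (d : ℕ) (a : Fin (d + 1) → K) (x y : K) : K :=
  ∑ i : Fin (d + 1), ((i : ℕ) : K) * a i * x ^ ((i : ℕ) - 1) * y ^ (d - (i : ℕ))

/-- Value at `(x,y)` of `∂G/∂y` for the binary form `G` of degree `d` with coefficient
vector `b`. -/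
def formEvalDy (d : ℕ) (b : Fin (d + 1) → K) (x y : K) : K :=
  ∑ i : Fin (d + 1), ((d - (i : ℕ) : ℕ) : K) * b i * x ^ (i : ℕ) * y ^ (d - (i : ℕ) - 1)

/-- The multiplier `λ_P` at a fixed point `P = [x:y]` of the map lifted by the pair of
degree-`d` binary forms `(a, b)`, where `c` is the scalar with `F(x,y) = c⬝x` and
`G(x,y) = c⬝y`: by the trace formula, `λ = (F_x(x,y) + G_y(x,y) - d⬝c)/c`. -/
noncomputable def multiplier (d : ℕ) (a b : Fin (d + 1) → K) (x y c : K) : K :=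
  (formEvalDx d a x y + formEvalDy d b x y - (d : K) * c) / c

/-!
At a place of good reduction `φ` does not decrease the ultrametric logarithmic distance. In
normalized coordinates (`min (v x) (v y) = 0`) one has `δ(P, Q) = v(x₁y₂ - x₂y₁)`; the lift
`(F, G)` keeps coordinates normalized, since the resultant is a unit and the adjugate of the
Sylvester matrix writes `Res · x^(2d-1)` and `Res · y^(2d-1)` as combinations of `F` and `G`;
and `x₁y₂ - x₂y₁` divides `F(x₁,y₁)G(x₂,y₂) - F(x₂,y₂)G(x₁,y₁)` with integral quotient.

Along the backward orbit `P_(-k)` of the fixed point `P₀`, non-expansion makes `δ(P_(-k), P₀)`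
decrease with `k`. The ultrametric inequality then gives `δ(P_(-b), P_(-a)) = δ(P_(-b), P₀)`
when `δ(P_(-b), P₀) < δ(P_(-a), P₀)`; in the case of equality one applies `φ` once and
inducts on `a`.
-/

section Valuation

variable (pl : Place K)

lemma extv_of_ne_zero {x : K} (hx : x ≠ 0) : extv pl x = pl.v x := if_neg hx

@[simp] lemma extv_zero : extv pl (0 : K) = ⊤ := if_pos rfl

lemma zero_le_extv_iff {x : K} : 0 ≤ extv pl x ↔ 0 ≤ pl.v x := by
  rcases eq_or_ne x 0 with rfl | hx
  · simp [pl.v_zero]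
  · rw [extv_of_ne_zero pl hx]; exact WithTop.coe_nonneg

noncomputable def Place.addValuation : AddValuation K (WithTop ℤ) :=
  AddValuation.of (extv pl) (extv_zero pl) (by rw [extv_of_ne_zero pl one_ne_zero, pl.v_one]; rfl)
    (fun x y => by
      rcases eq_or_ne x 0 with rfl | hx
      · simp
      rcases eq_or_ne y 0 with rfl | hy
      · simp
      rcases eq_or_ne (x + y) 0 with hxy | hxy
      · simp [hxy]
      rw [extv_of_ne_zero pl hx, extv_of_ne_zero pl hy, extv_of_ne_zero pl hxy, ← WithTop.coe_min,
        WithTop.coe_le_coe]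
      exact pl.v_add x y hx hy hxy)
    (fun x y => by
      rcases eq_or_ne x 0 with rfl | hx
      · simp
      rcases eq_or_ne y 0 with rfl | hy
      · simp
      rw [extv_of_ne_zero pl hx, extv_of_ne_zero pl hy, extv_of_ne_zero pl (mul_ne_zero hx hy),
        pl.v_mul x y hx hy, WithTop.coe_add])

@[simp] lemma Place.addValuation_apply (x : K) : (Place.addValuation pl) x = extv pl x := rfl

lemma extv_mul (x y : K) : extv pl (x * y) = extv pl x + extv pl y :=
  (Place.addValuation pl).map_mul x y

lemma extv_neg (x : K) : extv pl (-x) = extv pl x := (Place.addValuation pl).map_neg x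

end Valuation

section ProjectiveLine

variable (pl : Place K)

lemma P1.rep_ne (A : P1 K) : ¬(A.rep 0 = 0 ∧ A.rep 1 = 0) := fun h =>
  A.rep_nonzero (funext fun i => by fin_cases i <;> simp [h.1, h.2])

lemma P1.mk_smul {c : K} (hc : c ≠ 0) {x y : K} (h : ¬(x = 0 ∧ y = 0))
    (h' : ¬(c * x = 0 ∧ c * y = 0)) : P1.mk (c * x) (c * y) h' = P1.mk x y h := by
  refine (Projectivization.mk_eq_mk_iff _ _ _ _ _).2 ⟨Units.mk0 c hc, ?_⟩
  ext i; fin_cases i <;> simp [Units.smul_def]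

lemma P1.exists_rep_mk (x y : K) (h : ¬(x = 0 ∧ y = 0)) :
    ∃ c : K, c ≠ 0 ∧ (P1.mk x y h).rep 0 = c * x ∧ (P1.mk x y h).rep 1 = c * y := by
  obtain ⟨c, hc⟩ := (Projectivization.mk_eq_mk_iff _ _ _ (P1.mk x y h).rep_nonzero _).1
    (Projectivization.mk_rep (P1.mk x y h))
  exact ⟨c, c.ne_zero, by rw [← hc]; simp [Units.smul_def], by rw [← hc]; simp [Units.smul_def]⟩

lemma P1.mk_rep (A : P1 K) : P1.mk (A.rep 0) (A.rep 1) A.rep_ne = A := by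
  conv_rhs => rw [← Projectivization.mk_rep A]
  exact (Projectivization.mk_eq_mk_iff _ _ _ _ _).2 ⟨1, by ext i; fin_cases i <;> simp⟩

lemma coe_vminVec {w : Fin 2 → K} (hw : ¬(w 0 = 0 ∧ w 1 = 0)) :
    (vminVec pl w : WithTop ℤ) = min (extv pl (w 0)) (extv pl (w 1)) := by
  unfold vminVec
  split_ifs with h0 h1
  · simp [h0, extv_of_ne_zero pl (fun h1 => hw ⟨h0, h1⟩)]
  · simp [h1, extv_of_ne_zero pl h0]
  · simp [extv_of_ne_zero pl h0, extv_of_ne_zero pl h1]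

def IsNormalized (x y : K) : Prop := min (extv pl x) (extv pl y) = 0

namespace IsNormalized

variable {pl} {x y : K}

lemma not_both_zero (h : IsNormalized pl x y) : ¬(x = 0 ∧ y = 0) := fun h0 => by
  simp [IsNormalized, h0.1, h0.2] at h

lemma zero_le_left (h : IsNormalized pl x y) : 0 ≤ extv pl x := h ▸ min_le_left _ _

lemma zero_le_right (h : IsNormalized pl x y) : 0 ≤ extv pl y := h ▸ min_le_right _ _

lemma vminVec_smul (h : IsNormalized pl x y) {c : K} (hc : c ≠ 0) :
    vminVec pl ![c * x, c * y] = pl.v c := by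
  have hcxy : ¬(c * x = 0 ∧ c * y = 0) := by simpa [hc] using h.not_both_zero
  rw [← WithTop.coe_inj, coe_vminVec pl (by simpa using hcxy), ← extv_of_ne_zero pl hc]
  simp only [Matrix.cons_val_zero, Matrix.cons_val_one, extv_mul, min_add_add_left]
  rw [show min (extv pl x) (extv pl y) = 0 from h, add_zero]

end IsNormalized

lemma P1.exists_isNormalized (A : P1 K) :
    ∃ x y : K, ∃ h : IsNormalized pl x y, A = P1.mk x y h.not_both_zero := by
  obtain ⟨c, hc, hcv⟩ := pl.v_surj (-vminVec pl A.rep)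
  have hnorm : IsNormalized pl (c * A.rep 0) (c * A.rep 1) := by
    rw [IsNormalized, extv_mul, extv_mul, min_add_add_left, ← coe_vminVec pl A.rep_ne,
      extv_of_ne_zero pl hc, hcv, ← WithTop.coe_add, neg_add_cancel, WithTop.coe_zero]
  refine ⟨_, _, hnorm, ?_⟩
  rw [P1.mk_smul hc A.rep_ne, P1.mk_rep]

lemma logDist_mk_of_isNormalized {x₁ y₁ x₂ y₂ : K} (h₁ : IsNormalized pl x₁ y₁)
    (h₂ : IsNormalized pl x₂ y₂) :
    logDist pl (P1.mk x₁ y₁ h₁.not_both_zero) (P1.mk x₂ y₂ h₂.not_both_zero) =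
      extv pl (x₁ * y₂ - x₂ * y₁) := by
  obtain ⟨c₁, hc₁, e₁₀, e₁₁⟩ := P1.exists_rep_mk x₁ y₁ h₁.not_both_zero
  obtain ⟨c₂, hc₂, e₂₀, e₂₁⟩ := P1.exists_rep_mk x₂ y₂ h₂.not_both_zero
  have hrep (A : P1 K) : A.rep = ![A.rep 0, A.rep 1] := by ext i; fin_cases i <;> rfl
  rw [logDist, hrep, hrep (P1.mk x₂ y₂ _), e₁₀, e₁₁, e₂₀, e₂₁, h₁.vminVec_smul hc₁,
    h₂.vminVec_smul hc₂]
  simp only [Matrix.cons_val_zero, Matrix.cons_val_one]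
  rw [show c₁ * x₁ * (c₂ * y₂) - c₂ * x₂ * (c₁ * y₁) = c₁ * (c₂ * (x₁ * y₂ - x₂ * y₁)) by ring,
    extv_mul, extv_mul, extv_of_ne_zero pl hc₁, extv_of_ne_zero pl hc₂]
  induction extv pl (x₁ * y₂ - x₂ * y₁) using WithTop.recTopCoe with
  | top => simp
  | coe t => norm_cast; ring

lemma logDist_self (A : P1 K) : logDist pl A A = ⊤ := by
  simp [logDist]

lemma logDist_comm (A B : P1 K) : logDist pl A B = logDist pl B A := by
  rw [logDist, logDist, ← extv_neg, neg_sub]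
  congr 2
  ring

lemma min_extv_cross_le {x₁ y₁ x₂ y₂ x₃ y₃ : K} (h₁ : IsNormalized pl x₁ y₁)
    (h₂ : IsNormalized pl x₂ y₂) (h₃ : IsNormalized pl x₃ y₃) :
    min (extv pl (x₁ * y₂ - x₂ * y₁)) (extv pl (x₂ * y₃ - x₃ * y₂)) ≤
      extv pl (x₁ * y₃ - x₃ * y₁) := by
  have key : ∀ t u w : K, extv pl t = 0 → 0 ≤ extv pl u → 0 ≤ extv pl w →
      t * (x₁ * y₃ - x₃ * y₁) = u * (x₂ * y₃ - x₃ * y₂) + w * (x₁ * y₂ - x₂ * y₁) →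
      min (extv pl (x₁ * y₂ - x₂ * y₁)) (extv pl (x₂ * y₃ - x₃ * y₂)) ≤
        extv pl (x₁ * y₃ - x₃ * y₁) := by
    intro t u w ht hu hw hid
    calc min (extv pl (x₁ * y₂ - x₂ * y₁)) (extv pl (x₂ * y₃ - x₃ * y₂))
        ≤ min (extv pl u + extv pl (x₂ * y₃ - x₃ * y₂))
            (extv pl w + extv pl (x₁ * y₂ - x₂ * y₁)) := by
          rw [min_comm]
          exact min_le_min (le_add_of_nonneg_left hu) (le_add_of_nonneg_left hw)
      _ ≤ extv pl (t * (x₁ * y₃ - x₃ * y₁)) := by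
          rw [hid, ← extv_mul, ← extv_mul]
          exact (Place.addValuation pl).map_add _ _
      _ = extv pl (x₁ * y₃ - x₃ * y₁) := by rw [extv_mul, ht, zero_add]
  -- `x₂` or `y₂` is a unit `t`, and `t · D₁₃ = u · D₂₃ + w · D₁₂` with `u, w` the matching
  -- coordinates of the other two points
  rcases min_choice (extv pl x₂) (extv pl y₂) with hx | hy
  · exact key x₂ x₁ x₃ (hx ▸ h₂) h₁.zero_le_left h₃.zero_le_left (by ring)
  · exact key y₂ y₁ y₃ (hy ▸ h₂) h₁.zero_le_right h₃.zero_le_right (by ring)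

lemma logDist_ultra (A B C : P1 K) :
    min (logDist pl A B) (logDist pl B C) ≤ logDist pl A C := by
  obtain ⟨x₁, y₁, h₁, rfl⟩ := P1.exists_isNormalized pl A
  obtain ⟨x₂, y₂, h₂, rfl⟩ := P1.exists_isNormalized pl B
  obtain ⟨x₃, y₃, h₃, rfl⟩ := P1.exists_isNormalized pl C
  simp only [logDist_mk_of_isNormalized pl, h₁, h₂, h₃]
  exact min_extv_cross_le pl h₁ h₂ h₃

end ProjectiveLine

section Resultant

open Matrix

lemma sum_coeff_band_mul_monomial {d s : ℕ} (hs : s < d) (c : Fin (d + 1) → K)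
    (r : Fin (d + d) → K) (hr : ∀ k : Fin (d + 1), r ⟨s + k, by omega⟩ = c k)
    (hr' : ∀ j : Fin (d + d), (j : ℕ) < s ∨ s + d < j → r j = 0) (x y : K) :
    ∑ j, r j * (x ^ (j : ℕ) * y ^ (d + d - 1 - j)) =
      x ^ s * y ^ (d - 1 - s) * formEval d c x y := by
  rw [formEval, Finset.mul_sum, eq_comm]
  let e : Fin (d + 1) → Fin (d + d) := fun k => ⟨s + k, by omega⟩
  have hout (j : Fin (d + d)) (hj : j ∉ Set.range e) : (j : ℕ) < s ∨ s + d < j := by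
    by_contra hjs
    exact hj ⟨⟨j - s, by omega⟩, Fin.ext (by simp [e]; omega)⟩
  refine Fintype.sum_of_injective e (fun k l h => Fin.ext (by simpa [e] using congrArg Fin.val h))
    _ _ (fun j hj => by rw [hr' j (hout j hj), zero_mul]) (fun k => ?_)
  rw [hr, show d + d - 1 - (s + k) = (d - 1 - s) + (d - k) by omega, pow_add, pow_add]
  ring

lemma sylvester_mulVec_monomials (d : ℕ) (a b : Fin (d + 1) → K) (x y : K) (i : Fin (d + d)) :
    (sylvester d a b *ᵥ fun j : Fin (d + d) => x ^ (j : ℕ) * y ^ (d + d - 1 - j)) i =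
      if (i : ℕ) < d then x ^ (i : ℕ) * y ^ (d - 1 - i) * formEval d a x y
      else x ^ ((i : ℕ) - d) * y ^ (d - 1 - (i - d)) * formEval d b x y := by
  rw [mulVec, dotProduct]
  split_ifs with hi
  · refine sum_coeff_band_mul_monomial hi a _ (fun k => ?_) (fun j hj => ?_) x y
    · rw [sylvester, of_apply, dif_pos hi, dif_pos (by simp; omega)]
      simp
    · simp [sylvester, hi]; omega
  · refine sum_coeff_band_mul_monomial (by omega) b _ (fun k => ?_) (fun j hj => ?_) x y
    · rw [sylvester, of_apply, dif_neg hi, dif_pos (by simp; omega)]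
      simp
    · simp [sylvester, hi]; omega

lemma adjugate_apply_mem {R : Type*} [CommRing R] {n : Type*} [Fintype n] [DecidableEq n]
    (S : Subring R) {A : Matrix n n R} (hA : ∀ i j, A i j ∈ S) (i j : n) :
    A.adjugate i j ∈ S := by
  have hmap : A = S.subtype.mapMatrix (Matrix.of fun i j => ⟨A i j, hA i j⟩) := by ext; rfl
  rw [hmap, ← RingHom.map_adjugate]
  exact SetLike.coe_mem _

end Resultant

section GoodReduction

open Matrix

variable (pl : Place K)

lemma mem_integersAt_iff {x : K} : x ∈ integersAt pl ↔ 0 ≤ extv pl x :=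
  (zero_le_extv_iff pl).symm

lemma zero_le_extv_formEval {d : ℕ} {a : Fin (d + 1) → K} (ha : ∀ i, 0 ≤ extv pl (a i))
    {x y : K} (hx : 0 ≤ extv pl x) (hy : 0 ≤ extv pl y) : 0 ≤ extv pl (formEval d a x y) :=
  (Place.addValuation pl).map_le_sum fun i _ => by
    rw [AddValuation.map_mul, AddValuation.map_mul, AddValuation.map_pow, AddValuation.map_pow]
    exact add_nonneg (add_nonneg (ha i) (nsmul_nonneg hx _)) (nsmul_nonneg hy _)

lemma pos_extv_of_pos_extv_pow {x : K} {n : ℕ} (h : 0 < extv pl (x ^ n)) : 0 < extv pl x := by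
  by_contra hx
  rw [← Place.addValuation_apply, AddValuation.map_pow] at h
  exact h.not_ge (nsmul_nonpos (not_lt.1 hx) n)

lemma isNormalized_formEval {d : ℕ} (hd : 1 ≤ d) {a b : Fin (d + 1) → K}
    (ha : ∀ i, 0 ≤ extv pl (a i)) (hb : ∀ i, 0 ≤ extv pl (b i))
    (hres : extv pl (resultant d a b) = 0) {x y : K} (hxy : IsNormalized pl x y) :
    IsNormalized pl (formEval d a x y) (formEval d b x y) := by
  have hF := zero_le_extv_formEval pl ha hxy.zero_le_left hxy.zero_le_right
  have hG := zero_le_extv_formEval pl hb hxy.zero_le_left hxy.zero_le_right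
  refine le_antisymm (not_lt.1 fun hpos => ?_) (le_min hF hG)
  set A := sylvester d a b
  set v : Fin (d + d) → K := fun j => x ^ (j : ℕ) * y ^ (d + d - 1 - j)
  have hmono (s t : ℕ) : 0 ≤ extv pl (x ^ s * y ^ t) := by
    rw [extv_mul, ← Place.addValuation_apply, ← Place.addValuation_apply,
      AddValuation.map_pow, AddValuation.map_pow]
    exact add_nonneg (nsmul_nonneg hxy.zero_le_left _) (nsmul_nonneg hxy.zero_le_right _)
  have hAv (i : Fin (d + d)) : 0 < extv pl ((A *ᵥ v) i) := by
    rw [sylvester_mulVec_monomials]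
    split_ifs
    · rw [extv_mul]; exact (lt_min_iff.1 hpos).1.trans_le (le_add_of_nonneg_left (hmono _ _))
    · rw [extv_mul]; exact (lt_min_iff.1 hpos).2.trans_le (le_add_of_nonneg_left (hmono _ _))
  have hAint : ∀ i j, A i j ∈ integersAt pl := fun i j => by
    rw [mem_integersAt_iff]
    simp only [A, sylvester, of_apply]
    split_ifs <;> simp [ha, hb]
  -- every entry of `A v` lies in the maximal ideal, hence so does every entry of
  -- `Res · v = adj(A) (A v)`, among them `Res · x^(2d-1)` and `Res · y^(2d-1)`
  have hv (j : Fin (d + d)) : 0 < extv pl (v j) := by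
    have hadj : resultant d a b * v j = (A.adjugate *ᵥ (A *ᵥ v)) j := by
      rw [mulVec_mulVec, adjugate_mul, smul_mulVec, one_mulVec]; rfl
    have hres_v : extv pl (v j) = extv pl (resultant d a b * v j) := by
      rw [extv_mul pl (resultant d a b), hres, zero_add]
    rw [hres_v, hadj, mulVec, dotProduct]
    refine (Place.addValuation pl).map_lt_sum WithTop.zero_ne_top fun i _ => ?_
    rw [AddValuation.map_mul]
    exact (hAv i).trans_le
      (le_add_of_nonneg_left ((mem_integersAt_iff pl).1 (adjugate_apply_mem _ hAint j i)))
  have hx := hv ⟨d + d - 1, by omega⟩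
  have hy := hv ⟨0, by omega⟩
  simp only [v, Nat.sub_self, pow_zero, mul_one, one_mul, Nat.sub_zero] at hx hy
  exact (lt_min (pos_extv_of_pos_extv_pow pl hx) (pos_extv_of_pos_extv_pow pl hy)).ne' hxy

lemma cross_dvd_monomial_cross {R : Type*} [CommRing R] {d i j : ℕ} (hi : i ≤ d) (hj : j ≤ d)
    (x₁ y₁ x₂ y₂ : R) :
    x₁ * y₂ - x₂ * y₁ ∣ x₁ ^ i * y₁ ^ (d - i) * (x₂ ^ j * y₂ ^ (d - j)) -
      x₂ ^ i * y₂ ^ (d - i) * (x₁ ^ j * y₁ ^ (d - j)) := by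
  wlog hij : i ≤ j generalizing i j
  · rw [← dvd_neg, neg_sub]
    simpa only [mul_comm] using this hj hi (le_of_not_ge hij)
  obtain ⟨n, rfl⟩ := Nat.exists_eq_add_of_le hij
  rw [show x₁ ^ i * y₁ ^ (d - i) * (x₂ ^ (i + n) * y₂ ^ (d - (i + n))) -
      x₂ ^ i * y₂ ^ (d - i) * (x₁ ^ (i + n) * y₁ ^ (d - (i + n))) =
      -(x₁ ^ i * y₁ ^ (d - (i + n)) * (x₂ ^ i * y₂ ^ (d - (i + n)))) *
        ((x₁ * y₂) ^ n - (x₂ * y₁) ^ n) by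
    rw [show d - i = d - (i + n) + n by omega]; ring]
  exact (sub_dvd_pow_sub_pow _ _ n).mul_left _

lemma cross_dvd_form_cross {R : Type*} [CommRing R] (d : ℕ) (a b : Fin (d + 1) → R)
    (x₁ y₁ x₂ y₂ : R) :
    x₁ * y₂ - x₂ * y₁ ∣
      (∑ i : Fin (d + 1), a i * x₁ ^ (i : ℕ) * y₁ ^ (d - i)) *
          (∑ j : Fin (d + 1), b j * x₂ ^ (j : ℕ) * y₂ ^ (d - j)) -
        (∑ i : Fin (d + 1), a i * x₂ ^ (i : ℕ) * y₂ ^ (d - i)) *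
          (∑ j : Fin (d + 1), b j * x₁ ^ (j : ℕ) * y₁ ^ (d - j)) := by
  simp only [Finset.sum_mul_sum, ← Finset.sum_sub_distrib]
  refine Finset.dvd_sum fun i _ => Finset.dvd_sum fun j _ => ?_
  rw [show a i * x₁ ^ (i : ℕ) * y₁ ^ (d - i) * (b j * x₂ ^ (j : ℕ) * y₂ ^ (d - j)) -
      a i * x₂ ^ (i : ℕ) * y₂ ^ (d - i) * (b j * x₁ ^ (j : ℕ) * y₁ ^ (d - j)) =
      a i * b j * (x₁ ^ (i : ℕ) * y₁ ^ (d - i) * (x₂ ^ (j : ℕ) * y₂ ^ (d - j)) -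
        x₂ ^ (i : ℕ) * y₂ ^ (d - i) * (x₁ ^ (j : ℕ) * y₁ ^ (d - j))) by ring]
  exact (cross_dvd_monomial_cross (Fin.is_le i) (Fin.is_le j) x₁ y₁ x₂ y₂).mul_left _

lemma exists_formEval_cross_eq {d : ℕ} {a b : Fin (d + 1) → K}
    (ha : ∀ i, 0 ≤ extv pl (a i)) (hb : ∀ i, 0 ≤ extv pl (b i)) {x₁ y₁ x₂ y₂ : K}
    (hx₁ : 0 ≤ extv pl x₁) (hy₁ : 0 ≤ extv pl y₁) (hx₂ : 0 ≤ extv pl x₂) (hy₂ : 0 ≤ extv pl y₂) :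
    ∃ h : K, 0 ≤ extv pl h ∧
      formEval d a x₁ y₁ * formEval d b x₂ y₂ - formEval d a x₂ y₂ * formEval d b x₁ y₁ =
        (x₁ * y₂ - x₂ * y₁) * h := by
  simp only [← mem_integersAt_iff] at *
  obtain ⟨h, hh⟩ := cross_dvd_form_cross d (fun i => (⟨a i, ha i⟩ : integersAt pl))
    (fun i => ⟨b i, hb i⟩) ⟨x₁, hx₁⟩ ⟨y₁, hy₁⟩ ⟨x₂, hx₂⟩ ⟨y₂, hy₂⟩
  exact ⟨h, h.2, by simpa [formEval] using congrArg Subtype.val hh⟩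

lemma logDist_le_logDist_apply {φ : P1 K → P1 K} (hφ : GoodReduction pl φ) (P Q : P1 K) :
    logDist pl P Q ≤ logDist pl (φ P) (φ Q) := by
  obtain ⟨d, a, b, ⟨hres₀, hlift⟩, ha, hb, hres⟩ := hφ
  simp only [← zero_le_extv_iff] at ha hb
  obtain ⟨x₁, y₁, h₁, rfl⟩ := P1.exists_isNormalized pl P
  obtain ⟨x₂, y₂, h₂, rfl⟩ := P1.exists_isNormalized pl Q
  obtain ⟨_, e₁⟩ := hlift x₁ y₁ h₁.not_both_zero
  obtain ⟨_, e₂⟩ := hlift x₂ y₂ h₂.not_both_zero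
  rw [e₁, e₂]
  rcases Nat.eq_zero_or_pos d with rfl | hd
  · simp [formEval, logDist_self]
  have hres' : extv pl (resultant d a b) = 0 := by
    rw [extv_of_ne_zero pl hres₀, hres, WithTop.coe_zero]
  obtain ⟨h, hh, heq⟩ := exists_formEval_cross_eq pl ha hb h₁.zero_le_left h₁.zero_le_right
    h₂.zero_le_left h₂.zero_le_right
  rw [logDist_mk_of_isNormalized pl h₁ h₂,
    logDist_mk_of_isNormalized pl (isNormalized_formEval pl hd ha hb hres' h₁)
      (isNormalized_formEval pl hd ha hb hres' h₂), heq, extv_mul]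
  exact le_add_of_nonneg_right hh

end GoodReduction

section BackwardOrbit

variable {X α : Type*} [LinearOrder α] {δ : X → X → α} {f : X → X} {o : X} {x : ℕ → X} {n : ℕ}

lemma dist_backwardOrbit_fixedPt_antitone (hf : ∀ p q, δ p q ≤ δ (f p) (f q)) (ho : f o = o)
    (hx : ∀ k < n, f (x (k + 1)) = x k) {a b : ℕ} (hab : a ≤ b) (hb : b ≤ n) :
    δ (x b) o ≤ δ (x a) o := by
  induction b, hab using Nat.le_induction with
  | base => exact le_rfl
  | succ b _ ih => exact (hf _ _).trans (by rw [hx b (by omega), ho]; exact ih (by omega))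

lemma dist_backwardOrbit_eq_dist_fixedPt (hsymm : ∀ p q, δ p q = δ q p)
    (hultra : ∀ p q r, min (δ p q) (δ q r) ≤ δ p r) (hf : ∀ p q, δ p q ≤ δ (f p) (f q))
    (ho : f o = o) (hx₀ : x 0 = o) (hx : ∀ k < n, f (x (k + 1)) = x k) {a b : ℕ} (hab : a < b)
    (hb : b ≤ n) : δ (x b) (x a) = δ (x b) o := by
  have hanti {a b : ℕ} (hab : a ≤ b) (hb : b ≤ n) : δ (x b) o ≤ δ (x a) o :=
    dist_backwardOrbit_fixedPt_antitone hf ho hx hab hb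
  refine le_antisymm ?_ ?_
  · induction a generalizing b with
    | zero => rw [hx₀]
    | succ a ih =>
      obtain ⟨b, rfl⟩ : ∃ b', b = b' + 1 := ⟨b - 1, by omega⟩
      rcases lt_or_ge (δ (x (b + 1)) o) (δ (x (a + 1)) o) with hlt | hge
      · have h := hultra (x (b + 1)) (x (a + 1)) o
        exact (min_le_iff.1 h).resolve_right hlt.not_ge
      · calc δ (x (b + 1)) (x (a + 1))
            ≤ δ (x b) (x a) := by
              simpa only [hx b (by omega), hx a (by omega)] using hf (x (b + 1)) (x (a + 1))
          _ ≤ δ (x b) o := ih (by omega) (by omega)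
          _ ≤ δ (x (a + 1)) o := hanti (by omega) (by omega)
          _ ≤ δ (x (b + 1)) o := hge
  · calc δ (x b) o = min (δ (x b) o) (δ o (x a)) := by
          rw [hsymm o, min_eq_left (hanti hab.le hb)]
      _ ≤ δ (x b) (x a) := hultra _ _ _

end BackwardOrbit

theorem stmt12_general (K : Type) [Field K]
    (S : Finset (Place K)) (φ : P1 K → P1 K)
    (hgood : ∀ pl : Place K, pl ∉ S → GoodReduction pl φ)
    (m : ℕ) (P : P1 K)
    (horb : φ^[m - 1] P = P1zero) (hfix : φ P1zero = (P1zero : P1 K))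
    (a b : ℕ) (hab : a < b) (hb : b ≤ m - 1)
    (pl : Place K) (hpl : pl ∉ S) :
    logDist pl (φ^[m - 1 - b] P) (φ^[m - 1 - a] P) =
        logDist pl (φ^[m - 1 - b] P) P1zero ∧
      logDist pl (φ^[m - 1 - b] P) P1zero ≤ logDist pl (φ^[m - 1 - a] P) P1zero := by
  have hf := logDist_le_logDist_apply pl (hgood pl hpl)
  have hx : ∀ k < m - 1, φ (φ^[m - 1 - (k + 1)] P) = φ^[m - 1 - k] P := fun k hk => by
    rw [← Function.iterate_succ_apply' φ]
    congr 1
    omega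
  exact ⟨dist_backwardOrbit_eq_dist_fixedPt (x := fun k => φ^[m - 1 - k] P) (logDist_comm pl)
      (logDist_ultra pl) hf hfix horb hx hab hb,
    dist_backwardOrbit_fixedPt_antitone (x := fun k => φ^[m - 1 - k] P) hf hfix hx hab.le hb⟩

/-- Lemma 4.1.  Let `K` be a global field, `S` a finite set of places of
`K`, and `φ` an endomorphism of `ℙ¹` defined over `K` with good reduction outside `S`.
Suppose `P = P_(-m+1) ↦ P_(-m+2) ↦ … ↦ P_(-1) ↦ P_0 = [0:1] ↦ [0:1]` is an orbit for `φ`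
(so `P_(-a) = φ^(m-1-a)(P)` and `P_0 = [0:1]` is a fixed point).  Then for all integers
`0 < a < b ≤ m-1` and every place `𝔭 ∉ S`,
`δ_𝔭(P_(-b), P_(-a)) = δ_𝔭(P_(-b), P_0) ≤ δ_𝔭(P_(-a), P_0)`. -/
theorem stmt12 (K : Type) [Field K] (hK : IsGlobalField K)
    (S : Finset (Place K)) (φ : P1 K → P1 K) (hφ : IsEndo φ)
    (hgood : ∀ pl : Place K, pl ∉ S → GoodReduction pl φ)
    (m : ℕ) (hm : 1 ≤ m) (P : P1 K)
    (horb : φ^[m - 1] P = P1zero) (hfix : φ P1zero = (P1zero : P1 K))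
    (a b : ℕ) (ha : 0 < a) (hab : a < b) (hb : b ≤ m - 1)
    (pl : Place K) (hpl : pl ∉ S) :
    logDist pl (φ^[m - 1 - b] P) (φ^[m - 1 - a] P) =
        logDist pl (φ^[m - 1 - b] P) P1zero ∧
      logDist pl (φ^[m - 1 - b] P) P1zero ≤ logDist pl (φ^[m - 1 - a] P) P1zero :=
  stmt12_general K S φ hgood m P horb hfix a b hab hb pl hpl

end ArxivPreper
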